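/- arXiv:2309.09299 — 2 statements merged into one kernel-verified Lean document; each statement's English description precedes it below -/
import Mathlib

section
/- In the static binary choice panel model with stationary errors and binary covariate, the bound functions L(X,Y) = v(X,1)·Ȳ(X,Y,1) − v(X,0)·Ȳ(X,Y,0) − (1 − v(X,0)) and U(X,Y) = v(X,1)·Ȳ(X,Y,1) − v(X,0)·Ȳ(X,Y,0) + (1 − v(X,1)) satisfy E[L(X,Y) | X, A] ≤ m(A) ≤ E[U(X,Y) | X, A], where m(A) = E[Y_t | X_t=1, A] − E[Y_t | X_t=0, A]. -/
/-!
By stationarity `(X, A, ε_t)` has the same law for every `t`, so `q_d := E[g(d, A, ε_t) | X, A]`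
does not depend on `t`, and `m(A) = q_1 - q_0`. On the other hand `Ȳ(X, Y, d)` is a combination
`∑_t w_t g(d, A, ε_t)` whose weights `w_t = 1{X_t = d} / #{s | X_s = d}` are functions of `X` and sum
to `v(X, d)`; pulling them out of the conditional expectation gives
`E[v(X, d) Ȳ(X, Y, d) | X, A] = v(X, d) q_d`. With `q_d, v(X, d) ∈ [0, 1]` the two gaps
`m(A) - E[L | X, A] = (1 - v(X, 1)) q_1 + (1 - v(X, 0)) (1 - q_0)` and
`E[U | X, A] - m(A) = (1 - v(X, 1)) (1 - q_1) + (1 - v(X, 0)) q_0` are nonnegative.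
-/

open MeasureTheory ProbabilityTheory Finset

section Averaging

variable {ι : Type*} [Fintype ι]

noncomputable def avgWeight (p : ι → Prop) [DecidablePred p] (i : ι) : ℝ :=
  if p i then ((univ.filter p).card : ℝ)⁻¹ else 0

noncomputable def occurrence (b : ι → Bool) (d : Bool) : ℝ :=
  if ∃ i, b i = d then 1 else 0

noncomputable def periodMean (b : ι → Bool) (y : ι → ℝ) (d : Bool) : ℝ :=
  if (univ.filter fun i => b i = d).Nonempty then
    (∑ i ∈ univ.filter fun i => b i = d, y i) / (univ.filter fun i => b i = d).card
  else 0

lemma sum_avgWeight_mul (p : ι → Prop) [DecidablePred p] (y : ι → ℝ) :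
    ∑ i, avgWeight p i * y i = (∑ i ∈ univ.filter p, y i) / (univ.filter p).card := by
  simp only [avgWeight, ite_mul, zero_mul, ← sum_filter, ← mul_sum, div_eq_inv_mul]

lemma filter_eq_empty_of_not_occurs {b : ι → Bool} {d : Bool} (hb : ¬∃ i, b i = d) :
    univ.filter (fun i => b i = d) = ∅ :=
  filter_false_of_mem fun i _ hi => hb ⟨i, hi⟩

lemma occurrence_eq_sum_avgWeight (b : ι → Bool) (d : Bool) :
    occurrence b d = ∑ i, avgWeight (fun i => b i = d) i := by
  have h := sum_avgWeight_mul (fun i => b i = d) 1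
  simp only [Pi.one_apply, mul_one, sum_const, nsmul_eq_mul] at h
  rw [h, occurrence]
  split_ifs with hb
  · obtain ⟨i, hi⟩ := hb
    exact (div_self (by exact_mod_cast (card_pos.mpr ⟨i, by simpa using hi⟩).ne')).symm
  · rw [filter_eq_empty_of_not_occurs hb, card_empty, Nat.cast_zero, div_zero]

lemma occurrence_mem_Icc (b : ι → Bool) (d : Bool) : occurrence b d ∈ Set.Icc (0 : ℝ) 1 := by
  unfold occurrence
  split_ifs <;> norm_num

lemma occurrence_mul_periodMean_eq_sum_avgWeight_mul {b : ι → Bool} {d : Bool} {y z : ι → ℝ}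
    (hyz : ∀ i, b i = d → y i = z i) :
    occurrence b d * periodMean b y d = ∑ i, avgWeight (fun i => b i = d) i * z i := by
  rw [sum_avgWeight_mul, ← sum_congr rfl fun i hi => hyz i (mem_filter.mp hi).2, occurrence,
    periodMean]
  by_cases hb : ∃ i, b i = d
  · obtain ⟨i, hi⟩ := hb
    rw [if_pos ⟨i, hi⟩, if_pos ⟨i, by simpa using hi⟩, one_mul]
  · rw [if_neg hb, zero_mul, filter_eq_empty_of_not_occurs hb, sum_empty, zero_div]

end Averaging

section CondExp

variable {Ω : Type*} {m m₀ : MeasurableSpace Ω} {μ : Measure Ω}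

lemma condExp_sum_mul_of_condExp_eq {ι : Type*} [Fintype ι] {c f : ι → Ω → ℝ} {q : Ω → ℝ}
    (hc : ∀ i, StronglyMeasurable[m] (c i)) (hcf : ∀ i, Integrable (c i * f i) μ)
    (hf : ∀ i, Integrable (f i) μ) (hq : ∀ i, μ[f i | m] =ᵐ[μ] q) :
    μ[fun ω => ∑ i, c i ω * f i ω | m] =ᵐ[μ] fun ω => (∑ i, c i ω) * q ω := by
  have hterm : ∀ i, μ[c i * f i | m] =ᵐ[μ] c i * q := fun i =>
    (condExp_mul_of_stronglyMeasurable_left (hc i) (hcf i) (hf i)).trans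
      (Filter.EventuallyEq.rfl.mul (hq i))
  have hsum : (fun ω => ∑ i, c i ω * f i ω) = ∑ i, c i * f i := by
    ext ω; simp only [Finset.sum_apply, Pi.mul_apply]
  filter_upwards [hsum ▸ condExp_finsetSum (fun i _ => hcf i) m, ae_all_iff.mpr hterm]
    with ω hω hterm_ω
  simp only [hω, Finset.sum_apply, hterm_ω, Pi.mul_apply, sum_mul]

lemma condExp_add_of_stronglyMeasurable_right (hm : m ≤ m₀) [SigmaFinite (μ.trim hm)]
    {f g : Ω → ℝ} (hf : Integrable f μ) (hg : StronglyMeasurable[m] g) (hgi : Integrable g μ) :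
    μ[f + g | m] =ᵐ[μ] μ[f | m] + g :=
  (condExp_add hf hgi m).trans (by rw [condExp_of_stronglyMeasurable hm hg hgi])

lemma condExp_comap_eq_of_identDistrib {β γ : Type*} [MeasurableSpace β] [MeasurableSpace γ]
    [IsFiniteMeasure μ] {Z : Ω → β} {W₁ W₂ : Ω → γ} (hZ : Measurable Z)
    (h : IdentDistrib (fun ω => (Z ω, W₁ ω)) (fun ω => (Z ω, W₂ ω)) μ μ)
    {F : β × γ → ℝ} (hF : Measurable F) (hint : Integrable (fun ω => F (Z ω, W₂ ω)) μ) :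
    μ[fun ω => F (Z ω, W₁ ω) | MeasurableSpace.comap Z inferInstance] =ᵐ[μ]
      μ[fun ω => F (Z ω, W₂ ω) | MeasurableSpace.comap Z inferInstance] := by
  have hle := hZ.comap_le
  have hint₁ : Integrable (fun ω => F (Z ω, W₁ ω)) μ := ((h.comp hF).integrable_iff).mpr hint
  refine ae_eq_condExp_of_forall_setIntegral_eq hle hint
    (fun _ _ _ => integrable_condExp.integrableOn) ?_ stronglyMeasurable_condExp.aestronglyMeasurable
  rintro _ ⟨C, hC, rfl⟩ -
  have hslice : ∀ W : Ω → γ, ∫ ω in Z ⁻¹' C, F (Z ω, W ω) ∂μ =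
      ∫ ω, (C ×ˢ Set.univ).indicator F (Z ω, W ω) ∂μ := by
    intro W
    rw [← integral_indicator (hZ hC)]
    congr 1 with ω
    by_cases hω : Z ω ∈ C <;> simp [Set.indicator, hω]
  rw [setIntegral_condExp hle hint₁ ⟨C, hC, rfl⟩, hslice, hslice]
  exact (h.comp (hF.indicator (hC.prod MeasurableSet.univ))).integral_eq

lemma ae_mem_Icc_condExp [IsFiniteMeasure μ] (hm : m ≤ m₀) {f : Ω → ℝ} (hf : Integrable f μ)
    {a b : ℝ} (hab : ∀ ω, f ω ∈ Set.Icc a b) : ∀ᵐ ω ∂μ, μ[f | m] ω ∈ Set.Icc a b := by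
  have hlow := condExp_mono (m := m) (integrable_const a) hf (ae_of_all μ fun ω => (hab ω).1)
  have hup := condExp_mono (m := m) hf (integrable_const b) (ae_of_all μ fun ω => (hab ω).2)
  rw [condExp_const hm] at hlow hup
  filter_upwards [hlow, hup] with ω h₁ h₂ using ⟨h₁, h₂⟩

lemma measurable_comp_fst_comap {β γ : Type*} [MeasurableSpace β] [Countable β]
    [MeasurableSingletonClass β] [MeasurableSpace γ] (Z : Ω → β × γ) (F : β → ℝ) :
    Measurable[MeasurableSpace.comap Z inferInstance] fun ω => F (Z ω).1 :=
  (measurable_of_countable F).comp (measurable_fst.comp (comap_measurable Z))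

end CondExp

section Panel

variable {Ω 𝒜 ℰ : Type*} {T : ℕ} {X : Fin T → Ω → Bool} {A : Ω → 𝒜} {ε : Fin T → Ω → ℰ}
  {g : Bool → 𝒜 → ℰ → ℝ} {Y : Fin T → Ω → ℝ}

lemma occurrence_mul_periodMean_eq_sum_outcome (hY : ∀ t ω, Y t ω = g (X t ω) (A ω) (ε t ω))
    (d : Bool) :
    (fun ω => occurrence (fun t => X t ω) d * periodMean (fun t => X t ω) (fun t => Y t ω) d) =
      fun ω => ∑ t, avgWeight (fun s => X s ω = d) t * g d (A ω) (ε t ω) :=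
  funext fun ω => occurrence_mul_periodMean_eq_sum_avgWeight_mul fun t ht => by rw [hY, ht]

variable [MeasurableSpace 𝒜]

variable (X A) in
abbrev covariateSigma : MeasurableSpace Ω :=
  MeasurableSpace.comap (fun ω => ((fun t => X t ω), A ω)) inferInstance

lemma stronglyMeasurable_covariateSigma (F : (Fin T → Bool) → ℝ) :
    StronglyMeasurable[covariateSigma X A] fun ω => F fun t => X t ω :=
  (measurable_comp_fst_comap _ F).stronglyMeasurable

variable [MeasurableSpace Ω] {μ : Measure Ω}

lemma covariateSigma_le (hX : ∀ t, Measurable (X t)) (hA : Measurable A) :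
    covariateSigma X A ≤ ‹MeasurableSpace Ω› :=
  ((measurable_pi_lambda _ hX).prodMk hA).comap_le

lemma integrable_covariate_mul (hX : ∀ t, Measurable (X t)) (hA : Measurable A)
    (F : (Fin T → Bool) → ℝ) {f : Ω → ℝ} (hf : Integrable f μ) :
    Integrable (fun ω => (F fun t => X t ω) * f ω) μ := by
  obtain ⟨C, hC⟩ := Finite.exists_le fun b => ‖F b‖
  exact hf.bdd_mul ((stronglyMeasurable_covariateSigma F).mono
    (covariateSigma_le hX hA)).aestronglyMeasurable (ae_of_all μ fun ω => hC _)

lemma condExp_add_covariate [IsFiniteMeasure μ] (hX : ∀ t, Measurable (X t))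
    (hA : Measurable A) {f : Ω → ℝ} (hf : Integrable f μ) (F : (Fin T → Bool) → ℝ) :
    μ[f + (fun ω => F fun t => X t ω) | covariateSigma X A] =ᵐ[μ]
      μ[f | covariateSigma X A] + fun ω => F fun t => X t ω :=
  condExp_add_of_stronglyMeasurable_right (covariateSigma_le hX hA) hf
    (stronglyMeasurable_covariateSigma F)
    (by simpa using integrable_covariate_mul hX hA F (integrable_const (1 : ℝ)))

lemma integrable_occurrence_mul_periodMean (hX : ∀ t, Measurable (X t)) (hA : Measurable A)
    (hY : ∀ t ω, Y t ω = g (X t ω) (A ω) (ε t ω)) (d : Bool)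
    (hint : ∀ t, Integrable (fun ω => g d (A ω) (ε t ω)) μ) :
    Integrable (fun ω =>
      occurrence (fun t => X t ω) d * periodMean (fun t => X t ω) (fun t => Y t ω) d) μ := by
  rw [occurrence_mul_periodMean_eq_sum_outcome hY]
  exact integrable_finsetSum _ fun t _ =>
    integrable_covariate_mul hX hA (fun b => avgWeight (fun s => b s = d) t) (hint t)

lemma condExp_occurrence_mul_periodMean (hX : ∀ t, Measurable (X t)) (hA : Measurable A)
    (hY : ∀ t ω, Y t ω = g (X t ω) (A ω) (ε t ω)) (d : Bool)
    (hint : ∀ t, Integrable (fun ω => g d (A ω) (ε t ω)) μ) {q : Ω → ℝ}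
    (hq : ∀ t, μ[fun ω => g d (A ω) (ε t ω) | covariateSigma X A] =ᵐ[μ] q) :
    μ[fun ω => occurrence (fun t => X t ω) d * periodMean (fun t => X t ω) (fun t => Y t ω) d |
        covariateSigma X A] =ᵐ[μ] fun ω => occurrence (fun t => X t ω) d * q ω := by
  simp_rw [occurrence_mul_periodMean_eq_sum_outcome hY, occurrence_eq_sum_avgWeight]
  exact condExp_sum_mul_of_condExp_eq
    (fun t => stronglyMeasurable_covariateSigma fun b => avgWeight (fun s => b s = d) t)
    (fun t => integrable_covariate_mul hX hA (fun b => avgWeight (fun s => b s = d) t) (hint t))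
    hint hq

lemma condExp_meanContrast_add_covariate [IsFiniteMeasure μ] (hX : ∀ t, Measurable (X t))
    (hA : Measurable A) (hY : ∀ t ω, Y t ω = g (X t ω) (A ω) (ε t ω))
    (hint : ∀ d t, Integrable (fun ω => g d (A ω) (ε t ω)) μ) {q : Bool → Ω → ℝ}
    (hq : ∀ d t, μ[fun ω => g d (A ω) (ε t ω) | covariateSigma X A] =ᵐ[μ] q d)
    (F : (Fin T → Bool) → ℝ) :
    μ[fun ω => occurrence (fun t => X t ω) true * periodMean (fun t => X t ω) (fun t => Y t ω) true
        - occurrence (fun t => X t ω) false * periodMean (fun t => X t ω) (fun t => Y t ω) false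
        + F (fun t => X t ω) | covariateSigma X A] =ᵐ[μ]
      fun ω => occurrence (fun t => X t ω) true * q true ω
        - occurrence (fun t => X t ω) false * q false ω + F (fun t => X t ω) := by
  have hPint := fun d => integrable_occurrence_mul_periodMean hX hA hY d (hint d)
  have hP := (condExp_sub (m := covariateSigma X A) (hPint true) (hPint false)).trans
    ((condExp_occurrence_mul_periodMean hX hA hY true (hint true) (hq true)).sub
      (condExp_occurrence_mul_periodMean hX hA hY false (hint false) (hq false)))
  exact (condExp_add_covariate hX hA ((hPint true).sub (hPint false)) F).trans (hP.add .rfl)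

variable [MeasurableSpace ℰ]

lemma condExp_outcome_eq_of_identDistrib [IsFiniteMeasure μ] (hX : ∀ t, Measurable (X t))
    (hA : Measurable A) (hg : ∀ d, Measurable fun p : 𝒜 × ℰ => g d p.1 p.2) {t t' : Fin T}
    (hstat : IdentDistrib (fun ω => ((fun s => X s ω), A ω, ε t ω))
      (fun ω => ((fun s => X s ω), A ω, ε t' ω)) μ μ)
    (d : Bool) (hint : Integrable (fun ω => g d (A ω) (ε t' ω)) μ) :
    μ[fun ω => g d (A ω) (ε t ω) | covariateSigma X A] =ᵐ[μ]
      μ[fun ω => g d (A ω) (ε t' ω) | covariateSigma X A] :=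
  condExp_comap_eq_of_identDistrib ((measurable_pi_lambda _ hX).prodMk hA)
    (hstat.comp MeasurableEquiv.prodAssoc.symm.measurable)
    ((hg d).comp ((measurable_snd.comp measurable_fst).prodMk measurable_snd)) hint

end Panel

lemma contrast_bounds_of_mem_Icc {v₁ v₀ q₁ q₀ : ℝ} (hv₁ : v₁ ∈ Set.Icc (0 : ℝ) 1)
    (hv₀ : v₀ ∈ Set.Icc (0 : ℝ) 1) (hq₁ : q₁ ∈ Set.Icc (0 : ℝ) 1) (hq₀ : q₀ ∈ Set.Icc (0 : ℝ) 1) :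
    v₁ * q₁ - v₀ * q₀ + (v₀ - 1) ≤ q₁ - q₀ ∧ q₁ - q₀ ≤ v₁ * q₁ - v₀ * q₀ + (1 - v₁) := by
  constructor
  · linarith [mul_nonneg (sub_nonneg.2 hv₁.2) hq₁.1,
      mul_nonneg (sub_nonneg.2 hv₀.2) (sub_nonneg.2 hq₀.2)]
  · linarith [mul_nonneg (sub_nonneg.2 hv₁.2) (sub_nonneg.2 hq₁.2),
      mul_nonneg (sub_nonneg.2 hv₀.2) hq₀.1]

/-- In the static binary choice panel model `Y_t = g(X_t, A, ε_t)` with `g`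
constant over `t`, binary covariate `X_t`, outcomes in `{0,1}`, and errors `ε_t` whose
conditional distribution given `(X, A)` is stationary over `t` (encoded as
`(X, A, ε_t) =_d (X, A, ε_{t'})`), the bound functions
`L = v(X,1)·Ȳ(X,Y,1) − v(X,0)·Ȳ(X,Y,0) − (1 − v(X,0))` and
`U = v(X,1)·Ȳ(X,Y,1) − v(X,0)·Ȳ(X,Y,0) + (1 − v(X,1))` satisfy
`E[L(X,Y) | X, A] ≤ m(A) ≤ E[U(X,Y) | X, A]` almost surely, where
`m(A) = E[Y_t | X_t = 1, A] − E[Y_t | X_t = 0, A]` (equal, under the structural model, to the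
conditional expectation of `g(1,A,ε_t) − g(0,A,ε_t)` given `(X,A)`, for every `t`). -/
theorem stmt_11 {Ω 𝒜 ℰ : Type*} [MeasurableSpace Ω] [MeasurableSpace 𝒜] [MeasurableSpace ℰ]
    (μ : Measure Ω) [IsProbabilityMeasure μ]
    (T : ℕ) (hT : 0 < T)
    (X : Fin T → Ω → Bool) (A : Ω → 𝒜) (ε : Fin T → Ω → ℰ)
    (g : Bool → 𝒜 → ℰ → ℝ)
    (hg01 : ∀ d a e, g d a e = 0 ∨ g d a e = 1)
    (hXmeas : ∀ t, Measurable (X t)) (hAmeas : Measurable A) (hεmeas : ∀ t, Measurable (ε t))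
    (hgmeas : ∀ d, Measurable (fun p : 𝒜 × ℰ => g d p.1 p.2))
    (Y : Fin T → Ω → ℝ)
    (hY : ∀ t ω, Y t ω = g (X t ω) (A ω) (ε t ω))
    (hstat : ∀ t t' : Fin T,
      IdentDistrib (fun ω => ((fun s => X s ω), A ω, ε t ω))
        (fun ω => ((fun s => X s ω), A ω, ε t' ω)) μ μ)
    (mXA : MeasurableSpace Ω)
    (hmXA : mXA = MeasurableSpace.comap (fun ω => ((fun t => X t ω), A ω)) inferInstance)
    (mbar : Ω → ℝ)
    (hmbar : ∀ t : Fin T,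
      mbar =ᵐ[μ] μ[(fun ω => g true (A ω) (ε t ω) - g false (A ω) (ε t ω)) | mXA])
    (v : Bool → Ω → ℝ)
    (hv : ∀ d ω, v d ω = if ∃ t, X t ω = d then (1 : ℝ) else 0)
    (Ybar : Bool → Ω → ℝ)
    (hYbar : ∀ d ω, Ybar d ω =
      if (Finset.univ.filter (fun t => X t ω = d)).Nonempty then
        (∑ t ∈ Finset.univ.filter (fun t => X t ω = d), Y t ω) /
          (Finset.univ.filter (fun t => X t ω = d)).card
      else 0)
    (L U : Ω → ℝ)
    (hL : ∀ ω, L ω = v true ω * Ybar true ω - v false ω * Ybar false ω - (1 - v false ω))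
    (hU : ∀ ω, U ω = v true ω * Ybar true ω - v false ω * Ybar false ω + (1 - v true ω)) :
    ∀ᵐ ω ∂μ, (μ[L | mXA]) ω ≤ mbar ω ∧ mbar ω ≤ (μ[U | mXA]) ω := by
  obtain rfl : mXA = covariateSigma X A := hmXA
  obtain rfl : v = fun d ω => occurrence (fun t => X t ω) d :=
    -- `congr` identifies two different `Decidable (∃ t, _)` instances
    funext₂ fun d ω => by rw [hv, occurrence]; congr
  obtain rfl : Ybar = fun d ω => periodMean (fun t => X t ω) (fun t => Y t ω) d := funext₂ hYbar
  have hg_mem : ∀ d a e, g d a e ∈ Set.Icc (0 : ℝ) 1 := fun d a e => by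
    rcases hg01 d a e with h | h <;> simp [h]
  have hint : ∀ d t, Integrable (fun ω => g d (A ω) (ε t ω)) μ := fun d t =>
    .of_bound ((hgmeas d).comp (hAmeas.prodMk (hεmeas t))).aestronglyMeasurable 1
      (ae_of_all μ fun ω => by rcases hg01 d (A ω) (ε t ω) with h | h <;> simp [h])
  set t₀ : Fin T := ⟨0, hT⟩
  have hq : ∀ d t, μ[fun ω => g d (A ω) (ε t ω) | covariateSigma X A] =ᵐ[μ]
      μ[fun ω => g d (A ω) (ε t₀ ω) | covariateSigma X A] := fun d t =>
    condExp_outcome_eq_of_identDistrib hXmeas hAmeas hgmeas (hstat t t₀) d (hint d t₀)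
  obtain rfl : L = _ :=
    funext fun ω => (hL ω).trans ((sub_sub_eq_add_sub _ _ _).trans (add_sub_assoc _ _ _))
  obtain rfl : U = _ := funext hU
  filter_upwards [condExp_meanContrast_add_covariate hXmeas hAmeas hY hint hq
      fun b => occurrence b false - 1,
    condExp_meanContrast_add_covariate hXmeas hAmeas hY hint hq fun b => 1 - occurrence b true,
    (hmbar t₀).trans (condExp_sub (hint true t₀) (hint false t₀) _),
    ae_mem_Icc_condExp (covariateSigma_le hXmeas hAmeas) (hint true t₀) fun ω => hg_mem _ _ _,
    ae_mem_Icc_condExp (covariateSigma_le hXmeas hAmeas) (hint false t₀) fun ω => hg_mem _ _ _]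
    with ω hLω hUω hmω hq₁ hq₀
  rw [hLω, hUω, hmω]
  exact contrast_bounds_of_mem_Icc (occurrence_mem_Icc _ _) (occurrence_mem_Icc _ _) hq₁ hq₀
end

section
/- In the setting of the previous statement, E[U(X,Y)] − E[L(X,Y)] = E[(1 − v(X,1)) + (1 − v(X,0))] = P(X_t = 0 for all t) + P(X_t = 1 for all t); in particular if X_1,...,X_T are i.i.d. Bernoulli(p) with 0 < p < 1, the width of the bounds equals p^T + (1−p)^T, which decays exponentially in T. -/
/-!
The `Ybar` terms cancel in `U - L = (1 - v true) + (1 - v false)`, and `1 - v d` is the indicator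
of the event that no `X t` equals `d`, i.e. that all `X t` equal `!d`. Under independence the
probability of that event factors as a product of `T` equal Bernoulli probabilities.
-/

open MeasureTheory ProbabilityTheory

lemma one_sub_ite_exists_eq_indicator {ι Ω : Type*} (X : ι → Ω → Bool) (d : Bool) (ω : Ω)
    [Decidable (∃ t, X t ω = d)] :
    1 - (if ∃ t, X t ω = d then (1 : ℝ) else 0) = {ω | ∀ t, X t ω = !d}.indicator 1 ω := by
  by_cases h : ∃ t, X t ω = d <;> simp_all [Bool.eq_not_iff]

lemma measurableSet_setOf_forall_eq {ι Ω β : Type*} [Countable ι] [MeasurableSpace Ω]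
    [MeasurableSpace β] [MeasurableSingletonClass β] {X : ι → Ω → β}
    (hX : ∀ t, Measurable (X t)) (b : β) : MeasurableSet {ω | ∀ t, X t ω = b} := by
  simp only [Set.ofPred_forall]
  exact .iInter fun t => hX t (measurableSet_singleton b)

lemma measureReal_setOf_eq_false {Ω : Type*} [MeasurableSpace Ω] {μ : Measure Ω}
    [IsProbabilityMeasure μ] {f : Ω → Bool} (hf : Measurable f) :
    μ.real {ω | f ω = false} = 1 - μ.real {ω | f ω = true} := by
  have hcompl : {ω | f ω = false} = {ω | f ω = true}ᶜ := by ext ω; simp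
  have hm : MeasurableSet {ω | f ω = true} := hf (measurableSet_singleton true)
  rw [hcompl, probReal_compl_eq_one_sub hm]

lemma ProbabilityTheory.iIndepFun.measureReal_setOf_forall_eq {ι Ω β : Type*} [Fintype ι]
    [MeasurableSpace Ω] {μ : Measure Ω} [MeasurableSpace β] [MeasurableSingletonClass β]
    {X : ι → Ω → β} (hX : iIndepFun X μ) (b : β) :
    μ.real {ω | ∀ t, X t ω = b} = ∏ t, μ.real {ω | X t ω = b} := by
  simp only [measureReal_def, ← ENNReal.toReal_prod, Set.ofPred_forall]
  exact congrArg ENNReal.toReal (hX.meas_iInter fun t => ⟨{b}, measurableSet_singleton b, rfl⟩)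

theorem stmt_12_general {Ω : Type*} [MeasurableSpace Ω]
    (μ : Measure Ω) [IsProbabilityMeasure μ]
    (T : ℕ)
    (X : Fin T → Ω → Bool) (hXmeas : ∀ t, Measurable (X t))
    (v : Bool → Ω → ℝ)
    (hv : ∀ d ω, v d ω = if ∃ t, X t ω = d then (1 : ℝ) else 0)
    (Ybar : Bool → Ω → ℝ)
    (L U : Ω → ℝ)
    (hL : ∀ ω, L ω = v true ω * Ybar true ω - v false ω * Ybar false ω - (1 - v false ω))
    (hU : ∀ ω, U ω = v true ω * Ybar true ω - v false ω * Ybar false ω + (1 - v true ω))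
    (hLint : Integrable L μ) (hUint : Integrable U μ)
    (p : ℝ)
    (hindep : iIndepFun X μ)
    (hbern : ∀ t, (μ {ω | X t ω = true}).toReal = p) :
    (∫ ω, U ω ∂μ) - (∫ ω, L ω ∂μ)
        = (μ {ω | ∀ t, X t ω = false}).toReal + (μ {ω | ∀ t, X t ω = true}).toReal ∧
      (∫ ω, U ω ∂μ) - (∫ ω, L ω ∂μ) = p ^ T + (1 - p) ^ T := by
  have hmeas := measurableSet_setOf_forall_eq hXmeas
  have hgap : ∀ ω, U ω - L ω = {ω | ∀ t, X t ω = false}.indicator 1 ω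
      + {ω | ∀ t, X t ω = true}.indicator 1 ω := fun ω => by
    rw [hU, hL, hv, hv, one_sub_ite_exists_eq_indicator, one_sub_ite_exists_eq_indicator]
    simp only [Bool.not_true, Bool.not_false]
    ring
  have hwidth : (∫ ω, U ω ∂μ) - (∫ ω, L ω ∂μ)
      = μ.real {ω | ∀ t, X t ω = false} + μ.real {ω | ∀ t, X t ω = true} := by
    rw [← integral_sub hUint hLint, integral_congr_ae (.of_forall hgap),
      integral_add ((integrable_const 1).indicator (hmeas false))
        ((integrable_const 1).indicator (hmeas true)),
      integral_indicator_one (hmeas false), integral_indicator_one (hmeas true)]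
  refine ⟨hwidth, ?_⟩
  simp only [← measureReal_def] at hbern
  rw [hwidth, hindep.measureReal_setOf_forall_eq, hindep.measureReal_setOf_forall_eq]
  simp only [measureReal_setOf_eq_false (hXmeas _), hbern, Finset.prod_const, Finset.card_univ,
    Fintype.card_fin]
  ring

/-- In the static binary choice setting with binary covariate, the width of the
analytical bounds satisfies
`E[U(X,Y)] − E[L(X,Y)] = E[(1 − v(X,1)) + (1 − v(X,0))] = P(∀t, X_t = 0) + P(∀t, X_t = 1)`;
in particular, if `X_1, ..., X_T` are i.i.d. Bernoulli(p) with `0 < p < 1`, the width equals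
`p^T + (1−p)^T`, which decays exponentially in `T`. -/
theorem stmt_12 {Ω : Type*} [MeasurableSpace Ω]
    (μ : Measure Ω) [IsProbabilityMeasure μ]
    (T : ℕ) (hT : 0 < T)
    (X : Fin T → Ω → Bool) (hXmeas : ∀ t, Measurable (X t))
    (Y : Fin T → Ω → ℝ) (hY01 : ∀ t ω, Y t ω ∈ Set.Icc (0 : ℝ) 1)
    (v : Bool → Ω → ℝ)
    (hv : ∀ d ω, v d ω = if ∃ t, X t ω = d then (1 : ℝ) else 0)
    (Ybar : Bool → Ω → ℝ)
    (hYbar : ∀ d ω, Ybar d ω =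
      if (Finset.univ.filter (fun t => X t ω = d)).Nonempty then
        (∑ t ∈ Finset.univ.filter (fun t => X t ω = d), Y t ω) /
          (Finset.univ.filter (fun t => X t ω = d)).card
      else 0)
    (L U : Ω → ℝ)
    (hL : ∀ ω, L ω = v true ω * Ybar true ω - v false ω * Ybar false ω - (1 - v false ω))
    (hU : ∀ ω, U ω = v true ω * Ybar true ω - v false ω * Ybar false ω + (1 - v true ω))
    (hLint : Integrable L μ) (hUint : Integrable U μ)
    (p : ℝ) (hp0 : 0 < p) (hp1 : p < 1)
    (hindep : iIndepFun X μ)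
    (hbern : ∀ t, (μ {ω | X t ω = true}).toReal = p) :
    (∫ ω, U ω ∂μ) - (∫ ω, L ω ∂μ)
        = (μ {ω | ∀ t, X t ω = false}).toReal + (μ {ω | ∀ t, X t ω = true}).toReal ∧
      (∫ ω, U ω ∂μ) - (∫ ω, L ω ∂μ) = p ^ T + (1 - p) ^ T :=
  stmt_12_general μ T X hXmeas v hv Ybar L U hL hU hLint hUint p hindep hbern
end
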